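/- Let $X$ be a reflexive admissible Banach subspace of an associative algebra $\mathcal{A}$ with trace $\tau$, meaning: the space $Y(X) = \{y \in \mathcal{A} : yx, xy \in \mathcal{L}^1 \text{ for all } x \in X\}$ with norm $|y|_{Y(X)} = \sup_{|x|_X = 1} |\tau(yx)|$ is a Banach space, the map $y \mapsto (x \mapsto \tau(yx))$ is a surjection from $Y(X)$ onto $X^*$, and $\tau(xy) = \tau(yx)$ for all $x \in X$, $y \in Y(X)$. If additionally $Y(X)$ is admissible, then $Y(Y(X)) = X$ as sets and $|x|_{Y(Y(X))} = |x|_X$ for all $x \in X$. -/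

import Mathlib

/-- `Y(S) = {y ∈ A : yx, xy ∈ L¹ for all x ∈ S}`. -/
def Yset {A : Type*} [Ring A] [Algebra ℂ A] (L1 : Submodule ℂ A) (S : Set A) : Set A :=
  {y | ∀ x ∈ S, y * x ∈ L1 ∧ x * y ∈ L1}

/-- The norm `|y|_{Y(S)} = sup_{x ∈ S, n x = 1} |τ(yx)|`. -/
noncomputable def nYdef {A : Type*} [Ring A] [Algebra ℂ A] (L1 : Submodule ℂ A)
    (τ : L1 →ₗ[ℂ] ℂ) (S : Set A) (n : A → ℝ) (y : A) : ℝ :=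
  sSup {r | ∃ x ∈ S, n x = 1 ∧ ∃ h : y * x ∈ L1, r = ‖τ ⟨y * x, h⟩‖}

/-- `S` is a linear subspace of `A` which is a Banach space under the norm function `n`. -/
def IsBanachSub {A : Type*} [Ring A] [Algebra ℂ A] (S : Set A) (n : A → ℝ) : Prop :=
  (0 : A) ∈ S ∧ (∀ x ∈ S, ∀ y ∈ S, x + y ∈ S) ∧ (∀ (c : ℂ), ∀ x ∈ S, c • x ∈ S) ∧
  (∀ x ∈ S, 0 ≤ n x) ∧ (∀ x ∈ S, (n x = 0 ↔ x = 0)) ∧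
  (∀ (c : ℂ), ∀ x ∈ S, n (c • x) = ‖c‖ * n x) ∧
  (∀ x ∈ S, ∀ y ∈ S, n (x + y) ≤ n x + n y) ∧
  (∀ u : ℕ → A, (∀ k, u k ∈ S) →
    (∀ ε : ℝ, 0 < ε → ∃ N, ∀ p ≥ N, ∀ q ≥ N, n (u p - u q) < ε) →
    ∃ x ∈ S, ∀ ε : ℝ, 0 < ε → ∃ N, ∀ p ≥ N, n (u p - x) < ε)

/-- Admissibility of the Banach subspace `(S, n)` of `(A, τ)`: `Y(S)` with the norm
`|·|_{Y(S)}` is a Banach space (with finite norm), the map `y ↦ τ(y ·)` is onto the space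
of bounded linear functionals on `S`, and the trace commutes: `τ(xy) = τ(yx)`. -/
def Admissible {A : Type*} [Ring A] [Algebra ℂ A] (L1 : Submodule ℂ A)
    (τ : L1 →ₗ[ℂ] ℂ) (S : Set A) (n : A → ℝ) : Prop :=
  IsBanachSub (Yset L1 S) (nYdef L1 τ S n) ∧
  (∀ y ∈ Yset L1 S,
    BddAbove {r : ℝ | ∃ x ∈ S, n x = 1 ∧ ∃ h : y * x ∈ L1, r = ‖τ ⟨y * x, h⟩‖}) ∧
  (∀ f : A → ℂ,
    (∀ x ∈ S, ∀ y ∈ S, f (x + y) = f x + f y) →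
    (∀ (c : ℂ), ∀ x ∈ S, f (c • x) = c * f x) →
    (∃ C : ℝ, ∀ x ∈ S, ‖f x‖ ≤ C * n x) →
    ∃ y, ∃ hy : y ∈ Yset L1 S, ∀ x, ∀ hx : x ∈ S, f x = τ ⟨y * x, (hy x hx).1⟩) ∧
  (∀ x, ∀ hx : x ∈ S, ∀ y, ∀ hy : y ∈ Yset L1 S,
    τ ⟨x * y, (hy x hx).2⟩ = τ ⟨y * x, (hy x hx).1⟩)

/-!
The inclusion `X ⊆ Y(Y(X))` holds by the symmetry of the definition of `Y`. Conversely, for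
`z ∈ Y(Y(X))` the functional `y ↦ τ(yz)` on `Y(X)` is bounded by `|z|_{Y(Y(X))}` (trace
commutation plus the definition of the norm), so by reflexivity it equals `y ↦ τ(yx)` for some
`x ∈ X`; then `z - x` pairs to zero with all of `Y(X)`, so `|z - x|_{Y(Y(X))} = 0` and `z = x`.
For the norms, `|τ(xy)| ≤ |x|_X |y|_{Y(X)}` gives `≤`, and a Hahn–Banach functional norming `x`,
represented by some `y` with `|y|_{Y(X)} ≤ 1`, gives `≥`.
-/

structure IsNormedSubspace {E : Type*} [AddCommGroup E] [Module ℂ E] (S : Set E) (n : E → ℝ) :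
    Prop where
  zero_mem : (0 : E) ∈ S
  add_mem : ∀ x ∈ S, ∀ y ∈ S, x + y ∈ S
  smul_mem : ∀ (c : ℂ), ∀ x ∈ S, c • x ∈ S
  nonneg : ∀ x ∈ S, 0 ≤ n x
  eq_zero_iff : ∀ x ∈ S, n x = 0 ↔ x = 0
  map_smul_eq_mul : ∀ (c : ℂ), ∀ x ∈ S, n (c • x) = ‖c‖ * n x
  add_le : ∀ x ∈ S, ∀ y ∈ S, n (x + y) ≤ n x + n y

lemma IsBanachSub.isNormedSubspace {A : Type*} [Ring A] [Algebra ℂ A] {S : Set A} {n : A → ℝ}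
    (h : IsBanachSub S n) : IsNormedSubspace S n :=
  let ⟨h0, hadd, hsmul, hnn, hdef, hhom, htri, _⟩ := h
  ⟨h0, hadd, hsmul, hnn, hdef, hhom, htri⟩

lemma IsNormedSubspace.exists_norming_functional {E : Type*} [AddCommGroup E] [Module ℂ E]
    {S : Set E} {n : E → ℝ} (hS : IsNormedSubspace S n) {x : E} (hx : x ∈ S) :
    ∃ f : E → ℂ, (∀ a ∈ S, ∀ b ∈ S, f (a + b) = f a + f b) ∧
      (∀ (c : ℂ), ∀ a ∈ S, f (c • a) = c * f a) ∧ (∀ a ∈ S, ‖f a‖ ≤ n a) ∧ f x = n x := by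
  classical
  let M : Submodule ℂ E :=
    { carrier := S
      add_mem' := fun ha hb => hS.add_mem _ ha _ hb
      zero_mem' := hS.zero_mem
      smul_mem' := hS.smul_mem }
  let : NormedAddCommGroup M := AddGroupNorm.toNormedAddCommGroup
    { toFun := fun a => n a
      map_zero' := (hS.eq_zero_iff 0 hS.zero_mem).2 rfl
      add_le' := fun a b => hS.add_le a a.2 b b.2
      neg' := fun a => by
        simpa using hS.map_smul_eq_mul (-1) a a.2
      eq_zero_of_map_eq_zero' := fun a ha => Subtype.ext ((hS.eq_zero_iff a a.2).1 ha) }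
  let : NormedSpace ℂ M := ⟨fun c a => (hS.map_smul_eq_mul c a a.2).le⟩
  obtain ⟨g, hg, hgx⟩ := exists_dual_vector'' ℂ (⟨x, hx⟩ : M)
  let f : E → ℂ := fun a => if h : a ∈ S then g ⟨a, h⟩ else 0
  have hf : ∀ a (ha : a ∈ S), f a = g ⟨a, ha⟩ := fun a ha => dif_pos ha
  refine ⟨f, fun a ha b hb => ?_, fun c a ha => ?_, fun a ha => ?_, ?_⟩
  · rw [hf a ha, hf b hb, hf _ (hS.add_mem a ha b hb), ← map_add]
    rfl
  · rw [hf a ha, hf _ (hS.smul_mem c a ha), ← smul_eq_mul, ← map_smul]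
    rfl
  · rw [hf a ha]
    exact (g.le_opNorm _).trans (mul_le_of_le_one_left (norm_nonneg _) hg)
  · rw [hf x hx, hgx]
    rfl

section Trace

variable {A : Type*} [Ring A] [Algebra ℂ A] {L1 : Submodule ℂ A} (τ : L1 →ₗ[ℂ] ℂ)

open Classical in
/-- `τ` extended by zero outside `L¹`, so that pairings can be written without membership proofs. -/
noncomputable def extTrace (a : A) : ℂ :=
  if h : a ∈ L1 then τ ⟨a, h⟩ else 0

variable {τ}

lemma extTrace_of_mem {a : A} (h : a ∈ L1) : extTrace τ a = τ ⟨a, h⟩ :=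
  dif_pos h

lemma extTrace_zero : extTrace τ (0 : A) = 0 := by
  rw [extTrace_of_mem L1.zero_mem]
  exact τ.map_zero

lemma extTrace_add {a b : A} (ha : a ∈ L1) (hb : b ∈ L1) :
    extTrace τ (a + b) = extTrace τ a + extTrace τ b := by
  rw [extTrace_of_mem ha, extTrace_of_mem hb, extTrace_of_mem (L1.add_mem ha hb), ← map_add]
  rfl

lemma extTrace_sub {a b : A} (ha : a ∈ L1) (hb : b ∈ L1) :
    extTrace τ (a - b) = extTrace τ a - extTrace τ b := by
  rw [extTrace_of_mem ha, extTrace_of_mem hb, extTrace_of_mem (L1.sub_mem ha hb), ← map_sub]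
  rfl

lemma extTrace_smul (c : ℂ) {a : A} (ha : a ∈ L1) :
    extTrace τ (c • a) = c * extTrace τ a := by
  rw [extTrace_of_mem ha, extTrace_of_mem (L1.smul_mem c ha), ← smul_eq_mul, ← map_smul]
  rfl

variable {S : Set A} {n : A → ℝ} {x y : A}

lemma subset_Yset_Yset : S ⊆ Yset L1 (Yset L1 S) :=
  fun _ hx _ hy => (hy _ hx).symm

lemma sub_mem_Yset (hx : x ∈ Yset L1 S) (hy : y ∈ Yset L1 S) : x - y ∈ Yset L1 S := by
  intro a ha
  rw [sub_mul, mul_sub]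
  exact ⟨L1.sub_mem (hx a ha).1 (hy a ha).1, L1.sub_mem (hx a ha).2 (hy a ha).2⟩

lemma nYdef_nonneg : 0 ≤ nYdef L1 τ S n y :=
  Real.sSup_nonneg (by rintro r ⟨x, -, -, -, rfl⟩; positivity)

lemma nYdef_le_of_forall {C : ℝ} (hC : 0 ≤ C)
    (h : ∀ x ∈ S, y * x ∈ L1 → ‖extTrace τ (y * x)‖ ≤ C * n x) : nYdef L1 τ S n y ≤ C :=
  Real.sSup_le (by
    rintro r ⟨x, hx, h1, hyx, rfl⟩
    simpa [h1, extTrace_of_mem hyx] using h x hx hyx) hC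

lemma norm_extTrace_mul_le_of_bddAbove (hS : IsNormedSubspace S n)
    (hB : BddAbove {r : ℝ | ∃ x ∈ S, n x = 1 ∧ ∃ h : y * x ∈ L1, r = ‖τ ⟨y * x, h⟩‖})
    (hx : x ∈ S) (hyx : y * x ∈ L1) :
    ‖extTrace τ (y * x)‖ ≤ nYdef L1 τ S n y * n x := by
  rcases (hS.nonneg x hx).eq_or_lt with h0 | hpos
  · rw [← h0, mul_zero, (hS.eq_zero_iff x hx).1 h0.symm, mul_zero, extTrace_zero, norm_zero]
  set c : ℂ := (((n x)⁻¹ : ℝ) : ℂ)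
  have hcx : c • x ∈ S := hS.smul_mem c x hx
  have hcx1 : n (c • x) = 1 := by
    rw [hS.map_smul_eq_mul c x hx, Complex.norm_real, Real.norm_of_nonneg (inv_pos.2 hpos).le,
      inv_mul_cancel₀ hpos.ne']
  have hyc : y * (c • x) ∈ L1 := (mul_smul_comm c y x).symm ▸ L1.smul_mem c hyx
  have hle : ‖τ ⟨y * (c • x), hyc⟩‖ ≤ nYdef L1 τ S n y := le_csSup hB ⟨_, hcx, hcx1, hyc, rfl⟩
  rwa [← extTrace_of_mem hyc, mul_smul_comm, extTrace_smul c hyx, norm_mul, Complex.norm_real,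
    Real.norm_of_nonneg (inv_pos.2 hpos).le, inv_mul_le_iff₀ hpos, mul_comm] at hle

namespace Admissible

lemma extTrace_mul_comm (h : Admissible L1 τ S n) (hx : x ∈ S) (hy : y ∈ Yset L1 S) :
    extTrace τ (x * y) = extTrace τ (y * x) := by
  rw [extTrace_of_mem (hy x hx).2, extTrace_of_mem (hy x hx).1]
  exact h.2.2.2 x hx y hy

lemma norm_extTrace_mul_le (h : Admissible L1 τ S n) (hS : IsNormedSubspace S n)
    (hy : y ∈ Yset L1 S) (hx : x ∈ S) :
    ‖extTrace τ (y * x)‖ ≤ nYdef L1 τ S n y * n x :=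
  norm_extTrace_mul_le_of_bddAbove hS (h.2.1 y hy) hx (hy x hx).1

end Admissible

variable {X : Set A} {nX : A → ℝ}

lemma Yset_Yset_subset_of_reflexive (hYn : IsNormedSubspace (Yset L1 X) (nYdef L1 τ X nX))
    (hrefl : ∀ f : A → ℂ,
      (∀ y ∈ Yset L1 X, ∀ z ∈ Yset L1 X, f (y + z) = f y + f z) →
      (∀ (c : ℂ), ∀ y ∈ Yset L1 X, f (c • y) = c * f y) →
      (∃ C : ℝ, ∀ y ∈ Yset L1 X, ‖f y‖ ≤ C * nYdef L1 τ X nX y) →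
      ∃ x, ∃ hx : x ∈ X, ∀ y, ∀ hy : y ∈ Yset L1 X, f y = τ ⟨y * x, (hy x hx).1⟩)
    (hadmY : Admissible L1 τ (Yset L1 X) (nYdef L1 τ X nX)) :
    Yset L1 (Yset L1 X) ⊆ X := by
  intro z hz
  let f : A → ℂ := fun y => extTrace τ (y * z)
  have hfadd : ∀ a ∈ Yset L1 X, ∀ b ∈ Yset L1 X, f (a + b) = f a + f b := fun a ha b hb => by
    simp only [f, add_mul]
    exact extTrace_add (hz a ha).2 (hz b hb).2
  have hfsmul : ∀ (c : ℂ), ∀ a ∈ Yset L1 X, f (c • a) = c * f a := fun c a ha => by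
    simp only [f, smul_mul_assoc]
    exact extTrace_smul c (hz a ha).2
  have hfbdd : ∃ C : ℝ, ∀ y ∈ Yset L1 X, ‖f y‖ ≤ C * nYdef L1 τ X nX y := ⟨_, fun y hy => by
    simpa only [f, hadmY.extTrace_mul_comm hy hz] using hadmY.norm_extTrace_mul_le hYn hz hy⟩
  obtain ⟨x, hx, hfx⟩ := hrefl f hfadd hfsmul hfbdd
  have hzx : z - x ∈ Yset L1 (Yset L1 X) := sub_mem_Yset hz (subset_Yset_Yset hx)
  have hpair : ∀ y ∈ Yset L1 X, extTrace τ ((z - x) * y) = 0 := fun y hy => by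
    have hyzx : f y = extTrace τ (y * x) := by rw [hfx y hy, extTrace_of_mem]
    rw [← hadmY.extTrace_mul_comm hy hzx, mul_sub, extTrace_sub (hz y hy).2 (hy x hx).1,
      sub_eq_zero]
    exact hyzx
  have hzx0 : nYdef L1 τ (Yset L1 X) (nYdef L1 τ X nX) (z - x) = 0 :=
    le_antisymm (nYdef_le_of_forall le_rfl fun y hy _ => by simp [hpair y hy]) nYdef_nonneg
  rw [sub_eq_zero.1 ((hadmY.1.isNormedSubspace.eq_zero_iff _ hzx).1 hzx0)]
  exact hx

lemma nYdef_Yset_le (hXn : IsNormedSubspace X nX) (hadm : Admissible L1 τ X nX) (hx : x ∈ X) :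
    nYdef L1 τ (Yset L1 X) (nYdef L1 τ X nX) x ≤ nX x :=
  nYdef_le_of_forall (hXn.nonneg x hx) fun y hy _ => by
    rw [hadm.extTrace_mul_comm hx hy, mul_comm]
    exact hadm.norm_extTrace_mul_le hXn hy hx

lemma le_nYdef_Yset (hXn : IsNormedSubspace X nX) (hadm : Admissible L1 τ X nX)
    (hYn : IsNormedSubspace (Yset L1 X) (nYdef L1 τ X nX))
    (hadmY : Admissible L1 τ (Yset L1 X) (nYdef L1 τ X nX)) (hx : x ∈ X) :
    nX x ≤ nYdef L1 τ (Yset L1 X) (nYdef L1 τ X nX) x := by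
  obtain ⟨f, hfadd, hfsmul, hfle, hfx⟩ := hXn.exists_norming_functional hx
  obtain ⟨y, hy, hfy⟩ := hadm.2.2.1 f hfadd hfsmul ⟨1, fun a ha => by simpa using hfle a ha⟩
  have hy1 : nYdef L1 τ X nX y ≤ 1 := nYdef_le_of_forall zero_le_one fun a ha hya => by
    rw [extTrace_of_mem hya, ← hfy a ha, one_mul]
    exact hfle a ha
  calc nX x = ‖f x‖ := by rw [hfx, Complex.norm_real, Real.norm_of_nonneg (hXn.nonneg x hx)]
    _ = ‖extTrace τ (x * y)‖ := by
      rw [hfy x hx, ← extTrace_of_mem, hadm.extTrace_mul_comm hx hy]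
    _ ≤ nYdef L1 τ (Yset L1 X) (nYdef L1 τ X nX) x * nYdef L1 τ X nX y :=
      hadmY.norm_extTrace_mul_le hYn (subset_Yset_Yset hx) hy
    _ ≤ nYdef L1 τ (Yset L1 X) (nYdef L1 τ X nX) x := mul_le_of_le_one_right nYdef_nonneg hy1

end Trace

/-- **Lemma 3.3.**  Let `X` be a reflexive admissible Banach subspace of the algebra `A`
with trace `τ`, such that `Y(X)` is also admissible.  (Reflexivity is expressed, via the
isometric identification `Y(X) ≅ X*`, as: every bounded linear functional on `Y(X)` is
represented by some `x ∈ X` through the trace pairing.)  Then `Y(Y(X)) = X` as sets and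
`|x|_{Y(Y(X))} = |x|_X` for all `x ∈ X`. -/
theorem stmt1 {A : Type*} [Ring A] [Algebra ℂ A]
    (L1 : Submodule ℂ A) (τ : L1 →ₗ[ℂ] ℂ)
    (X : Set A) (nX : A → ℝ)
    (hX : IsBanachSub X nX)
    (hadm : Admissible L1 τ X nX)
    (hrefl : ∀ f : A → ℂ,
      (∀ y ∈ Yset L1 X, ∀ z ∈ Yset L1 X, f (y + z) = f y + f z) →
      (∀ (c : ℂ), ∀ y ∈ Yset L1 X, f (c • y) = c * f y) →
      (∃ C : ℝ, ∀ y ∈ Yset L1 X, ‖f y‖ ≤ C * nYdef L1 τ X nX y) →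
      ∃ x, ∃ hx : x ∈ X, ∀ y, ∀ hy : y ∈ Yset L1 X, f y = τ ⟨y * x, (hy x hx).1⟩)
    (hadmY : Admissible L1 τ (Yset L1 X) (nYdef L1 τ X nX)) :
    Yset L1 (Yset L1 X) = X ∧
    ∀ x ∈ X, nYdef L1 τ (Yset L1 X) (nYdef L1 τ X nX) x = nX x := by
  have hXn := hX.isNormedSubspace
  have hYn := hadm.1.isNormedSubspace
  refine ⟨(Yset_Yset_subset_of_reflexive hYn hrefl hadmY).antisymm subset_Yset_Yset,
    fun x hx => ?_⟩
  exact (nYdef_Yset_le hXn hadm hx).antisymm (le_nYdef_Yset hXn hadm hYn hadmY hx)
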